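/- There exists a finite constant a, depending only on P_X and W, such that for every real γ ≥ 0, Σ_{n=0}^∞ E[exp(−[S_n − γ]^+)] ≤ γ/C + a. -/

import Mathlib

open MeasureTheory ProbabilityTheory

/-- Output marginal `P_Y(y) = Σ_x P_X(x) W(y|x)`. -/
noncomputable def outDist {𝒳 𝒴 : Type*} [Fintype 𝒳] (pX : 𝒳 → ℝ) (W : 𝒳 → 𝒴 → ℝ)
    (y : 𝒴) : ℝ := ∑ x, pX x * W x y

/-- Information density `i(x;y) = log (W(y|x) / P_Y(y))`. -/
noncomputable def infoDen {𝒳 𝒴 : Type*} [Fintype 𝒳] (pX : 𝒳 → ℝ) (W : 𝒳 → 𝒴 → ℝ)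
    (x : 𝒳) (y : 𝒴) : ℝ := Real.log (W x y / outDist pX W y)

/-!
Write `Sₙ` for the walk whose increments `i(X_k;Y_k)` are bounded by `B` and have mean `C > 0`,
and `τ` for the first time it exceeds `γ`. Before `τ` the integrand is at most `1`, and Wald's
identity bounds `E[τ] = Σₙ P(τ > n)` by `(γ + B) / C`, the overshoot being at most `B`. After `τ`
one has `(Sₙ - γ)⁺ ≥ (Sₙ - S_τ) / 2`, and `exp (-(Sₙ - S_τ) / 2)` is independent of the past up to
`τ` with mean `ρ ^ (n - τ)`, where `ρ = E exp (-i / 2) < 1` by AM–GM against `E exp (-i) = 1`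
(strictly, as `i` is not identically `0`). Summing the geometric series gives
`a = B / C + 1 / (1 - ρ)`.
-/

open Finset Real

lemma exp_neg_half_le (z : ℝ) : exp (-z / 2) ≤ (1 + exp (-z)) / 2 := by
  have h : exp (-z) = exp (-z / 2) ^ 2 := by rw [sq, ← exp_add]; ring_nf
  nlinarith [sq_nonneg (1 - exp (-z / 2))]

lemma exp_neg_half_lt {z : ℝ} (hz : z ≠ 0) : exp (-z / 2) < (1 + exp (-z)) / 2 := by
  have h : exp (-z) = exp (-z / 2) ^ 2 := by rw [sq, ← exp_add]; ring_nf
  have hne : 1 - exp (-z / 2) ≠ 0 := by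
    rw [sub_ne_zero, ne_comm, Ne, exp_eq_one_iff]
    exact fun h' => hz (by linarith)
  nlinarith [sq_pos_of_ne_zero hne]

lemma sum_mul_exp_neg_half_lt_one {ι : Type*} [Fintype ι] {w z : ι → ℝ} (hw : ∀ i, 0 ≤ w i)
    (hw1 : ∑ i, w i = 1) (hz : ∑ i, w i * exp (-z i) = 1) {i₀ : ι} (hi₀ : 0 < w i₀)
    (hz₀ : z i₀ ≠ 0) :
    ∑ i, w i * exp (-z i / 2) < 1 :=
  calc ∑ i, w i * exp (-z i / 2) < ∑ i, w i * ((1 + exp (-z i)) / 2) :=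
        sum_lt_sum (fun i _ => mul_le_mul_of_nonneg_left (exp_neg_half_le _) (hw i))
          ⟨i₀, mem_univ _, mul_lt_mul_of_pos_left (exp_neg_half_lt hz₀) hi₀⟩
    _ = (∑ i, w i + ∑ i, w i * exp (-z i)) / 2 := by
        rw [← sum_add_distrib, sum_div]
        exact sum_congr rfl fun i _ => by ring
    _ = 1 := by rw [hw1, hz]; norm_num

lemma sum_range_sum_range_mul_pow_le {a : ℕ → ℝ} (ha : ∀ m, 0 ≤ a m) {ρ : ℝ} (hρ0 : 0 ≤ ρ)
    (hρ1 : ρ < 1) (N : ℕ) :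
    ∑ n ∈ range N, ∑ m ∈ range n, a m * ρ ^ (n - (m + 1)) ≤ (∑ m ∈ range N, a m) / (1 - ρ) := by
  simp only [range_eq_Ico]
  rw [← sum_Ico_Ico_comm', sum_div]
  refine sum_le_sum fun m _ => ?_
  rw [← mul_sum, div_eq_mul_one_div]
  refine mul_le_mul_of_nonneg_left ?_ (ha m)
  rw [sum_Ico_eq_sum_range]
  simpa using geom_sum_Ico_le_of_lt_one (m := 0) (n := N - (m + 1)) hρ0 hρ1

abbrev blockSigma {Ω : Type*} (Z : ℕ → Ω → ℝ) (s : Set ℕ) : MeasurableSpace Ω :=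
  ⨆ k ∈ s, MeasurableSpace.comap (Z k) inferInstance

def walk {Ω : Type*} (Z : ℕ → Ω → ℝ) (n : ℕ) (ω : Ω) : ℝ := ∑ k ∈ range n, Z k ω

def stayedBelow {Ω : Type*} (Z : ℕ → Ω → ℝ) (γ : ℝ) (n : ℕ) : Set Ω :=
  {ω | ∀ k ≤ n, walk Z k ω ≤ γ}

/-- The walk first exceeds `γ` at time `m + 1`. -/
def exitsAfter {Ω : Type*} (Z : ℕ → Ω → ℝ) (γ : ℝ) (m : ℕ) : Set Ω :=
  stayedBelow Z γ m ∩ {ω | γ < walk Z (m + 1) ω}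

section RandomWalk

variable {Ω : Type*} {Z : ℕ → Ω → ℝ} {γ : ℝ}

lemma walk_sub_walk {m n : ℕ} (h : m ≤ n) (ω : Ω) :
    walk Z n ω - walk Z m ω = ∑ k ∈ Ico m n, Z k ω :=
  (sum_Ico_eq_sub _ h).symm

lemma stayedBelow_antitone : Antitone (stayedBelow Z γ) :=
  fun _ _ hmn _ hω k hk => hω k (hk.trans hmn)

lemma stayedBelow_eq_union (n : ℕ) :
    stayedBelow Z γ n = stayedBelow Z γ (n + 1) ∪ exitsAfter Z γ n := by
  ext ω
  constructor
  · intro hω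
    by_cases h : walk Z (n + 1) ω ≤ γ
    · refine Or.inl fun k hk => ?_
      rcases Nat.lt_or_ge k (n + 1) with hk' | hk'
      · exact hω k (Nat.lt_succ_iff.1 hk')
      · rwa [le_antisymm hk hk']
    · exact Or.inr ⟨hω, not_le.1 h⟩
  · rintro (hω | hω)
    · exact stayedBelow_antitone n.le_succ hω
    · exact hω.1

lemma disjoint_stayedBelow_exitsAfter (n : ℕ) :
    Disjoint (stayedBelow Z γ (n + 1)) (exitsAfter Z γ n) :=
  Set.disjoint_left.2 fun _ hω hω' => (hω (n + 1) le_rfl).not_gt hω'.2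

lemma indicator_stayedBelow_add_sum_indicator_exitsAfter (hγ : 0 ≤ γ) (n : ℕ) (ω : Ω) :
    (stayedBelow Z γ n).indicator 1 ω + ∑ m ∈ range n, (exitsAfter Z γ m).indicator 1 ω
      = (1 : ℝ) := by
  induction n with
  | zero =>
    have h0 : ω ∈ stayedBelow Z γ 0 := fun k hk => by
      simpa [walk, Nat.le_zero.1 hk] using hγ
    simp [Set.indicator_of_mem h0]
  | succ n ih =>
    have hsplit : (stayedBelow Z γ n).indicator (1 : Ω → ℝ) ω
        = (stayedBelow Z γ (n + 1)).indicator 1 ω + (exitsAfter Z γ n).indicator 1 ω := by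
      rw [stayedBelow_eq_union n,
        Set.indicator_union_of_disjoint (disjoint_stayedBelow_exitsAfter n)]
    rw [sum_range_succ, ← ih, hsplit]
    ring

lemma exp_neg_posPart_le_prod {t n : ℕ} {ω : Ω} (ht : γ < walk Z t ω) (htn : t ≤ n) :
    exp (-max (walk Z n ω - γ) 0) ≤ ∏ k ∈ Ico t n, exp (-Z k ω / 2) := by
  rw [← exp_sum, exp_le_exp, ← sum_div, sum_neg_distrib, ← walk_sub_walk htn]
  rcases le_total (walk Z n ω - γ) 0 with h | h
  · rw [max_eq_right h]; linarith
  · rw [max_eq_left h]; linarith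

lemma exp_neg_posPart_le_indicator_add_sum (hγ : 0 ≤ γ) (n : ℕ) (ω : Ω) :
    exp (-max (walk Z n ω - γ) 0) ≤ (stayedBelow Z γ n).indicator 1 ω
      + ∑ m ∈ range n,
          (exitsAfter Z γ m).indicator 1 ω * ∏ k ∈ Ico (m + 1) n, exp (-Z k ω / 2) := by
  set e := exp (-max (walk Z n ω - γ) 0)
  have he : e ≤ 1 := exp_le_one_iff.2 (neg_nonpos.2 (le_max_right _ _))
  calc e = (stayedBelow Z γ n).indicator 1 ω * e
        + ∑ m ∈ range n, (exitsAfter Z γ m).indicator 1 ω * e := by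
        rw [← sum_mul, ← add_mul, indicator_stayedBelow_add_sum_indicator_exitsAfter hγ, one_mul]
    _ ≤ _ := by
        refine add_le_add ?_ (sum_le_sum fun m hm => ?_)
        · exact mul_le_of_le_one_right (Set.indicator_nonneg (fun _ _ => zero_le_one) _) he
        · by_cases hω : ω ∈ exitsAfter Z γ m
          · simpa [Set.indicator_of_mem hω] using exp_neg_posPart_le_prod hω.2 (mem_range.1 hm)
          · simp [Set.indicator_of_notMem hω]

lemma measurable_blockSigma {s : Set ℕ} {k : ℕ} (hk : k ∈ s) : Measurable[blockSigma Z s] (Z k) :=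
  Measurable.of_comap_le (le_iSup₂ (f := fun k (_ : k ∈ s) => MeasurableSpace.comap (Z k) _) k hk)

lemma measurable_sum_blockSigma {s : Set ℕ} {t : Finset ℕ} (ht : ↑t ⊆ s) :
    Measurable[blockSigma Z s] fun ω => ∑ k ∈ t, Z k ω :=
  Finset.measurable_sum _ fun _ hk => measurable_blockSigma (ht hk)

lemma measurableSet_stayedBelow (n : ℕ) :
    MeasurableSet[blockSigma Z (Set.Iio n)] (stayedBelow Z γ n) := by
  have : stayedBelow Z γ n = ⋂ k ∈ Set.Iic n, {ω | walk Z k ω ≤ γ} := by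
    ext; simp [stayedBelow]
  rw [this]
  refine MeasurableSet.biInter (Set.to_countable _) fun k hk => measurableSet_le ?_ measurable_const
  exact measurable_sum_blockSigma fun j hj =>
    Set.mem_Iio.2 ((mem_range.1 hj).trans_le (Set.mem_Iic.1 hk))

lemma measurableSet_exitsAfter (m : ℕ) :
    MeasurableSet[blockSigma Z (Set.Iio (m + 1))] (exitsAfter Z γ m) := by
  have hle : blockSigma Z (Set.Iio m) ≤ blockSigma Z (Set.Iio (m + 1)) :=
    biSup_mono fun _ hj => Set.Iio_subset_Iio m.le_succ hj
  exact (hle _ (measurableSet_stayedBelow m)).inter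
    (measurableSet_lt measurable_const (measurable_sum_blockSigma fun _ hj => mem_range.1 hj))

lemma sum_indicator_stayedBelow_mul_le {B : ℝ} (hγ : 0 ≤ γ) (hB : ∀ k ω, |Z k ω| ≤ B)
    (n : ℕ) (ω : Ω) :
    ∑ k ∈ range n, (stayedBelow Z γ k).indicator 1 ω * Z k ω ≤ γ + B := by
  induction n with
  | zero => simpa using add_nonneg hγ ((abs_nonneg _).trans (hB 0 ω))
  | succ n ih =>
    rw [sum_range_succ]
    by_cases hω : ω ∈ stayedBelow Z γ n
    · have hwalk : ∑ k ∈ range n, (stayedBelow Z γ k).indicator 1 ω * Z k ω = walk Z n ω :=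
        sum_congr rfl fun k hk => by
          rw [Set.indicator_of_mem (stayedBelow_antitone (mem_range.1 hk).le hω), Pi.one_apply,
            one_mul]
      rw [hwalk, Set.indicator_of_mem hω, Pi.one_apply, one_mul]
      linarith [hω n le_rfl, (abs_le.1 (hB n ω)).2]
    · rwa [Set.indicator_of_notMem hω, zero_mul, add_zero]

end RandomWalk

section Expectations

variable {Ω : Type*} [MeasurableSpace Ω] {μ : Measure Ω} {Z : ℕ → Ω → ℝ} {γ B ρ : ℝ}

lemma blockSigma_le (hZm : ∀ k, Measurable (Z k)) (s : Set ℕ) :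
    blockSigma Z s ≤ ‹MeasurableSpace Ω› :=
  iSup₂_le fun k _ => (hZm k).comap_le

lemma integral_mul_eq_mul_integral_of_disjoint (hZ : iIndepFun Z μ) (hZm : ∀ k, Measurable (Z k))
    {s t : Set ℕ} (hst : Disjoint s t) {f g : Ω → ℝ} (hf : Measurable[blockSigma Z s] f)
    (hg : Measurable[blockSigma Z t] g) :
    ∫ ω, f ω * g ω ∂μ = (∫ ω, f ω ∂μ) * ∫ ω, g ω ∂μ := by
  have hfg : IndepFun f g μ := by
    rw [IndepFun_iff_Indep]
    exact indep_of_indep_of_le_right (indep_of_indep_of_le_left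
      (indep_iSup_of_disjoint (fun k => (hZm k).comap_le) hZ.iIndep hst) hf.comap_le) hg.comap_le
  exact hfg.integral_fun_mul_eq_mul_integral
    (hf.mono (blockSigma_le hZm s) le_rfl).aestronglyMeasurable
    (hg.mono (blockSigma_le hZm t) le_rfl).aestronglyMeasurable

lemma integrable_indicator_one_mul {s : Set Ω} (hs : MeasurableSet s) {g : Ω → ℝ}
    (hg : Integrable g μ) : Integrable (fun ω => s.indicator 1 ω * g ω) μ := by
  refine (hg.indicator hs).congr (ae_of_all _ fun ω => ?_)
  by_cases hω : ω ∈ s <;> simp [hω]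

lemma integral_prod_comp_le_pow (hZ : iIndepFun Z μ) (hZm : ∀ k, Measurable (Z k)) {f : ℝ → ℝ}
    (hf : Measurable f) (hf0 : ∀ x, 0 ≤ f x) (hρ : ∀ k, ∫ ω, f (Z k ω) ∂μ ≤ ρ) (s : Finset ℕ) :
    ∫ ω, ∏ k ∈ s, f (Z k ω) ∂μ ≤ ρ ^ s.card := by
  have h := (hZ.precomp (g := ((↑) : s → ℕ)) Subtype.val_injective).integral_fun_prod_comp
    (f := fun _ => f) (fun i => (hZm i).aemeasurable) (fun _ => hf.aestronglyMeasurable)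
  rw [← prod_const, ← prod_coe_sort s,
    ← integral_congr_ae (ae_of_all _ fun ω => prod_coe_sort s fun k => f (Z k ω)), h]
  exact prod_le_prod (fun k _ => integral_nonneg fun ω => hf0 _) fun k _ => hρ k

variable [IsProbabilityMeasure μ]

lemma sum_measureReal_stayedBelow_le (hZ : iIndepFun Z μ) (hZm : ∀ k, Measurable (Z k))
    (hB : ∀ k ω, |Z k ω| ≤ B) {C : ℝ} (hC : 0 < C) (hmean : ∀ k, C ≤ ∫ ω, Z k ω ∂μ)
    (hγ : 0 ≤ γ) (n : ℕ) :
    ∑ k ∈ range n, μ.real (stayedBelow Z γ k) ≤ (γ + B) / C := by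
  have hG : ∀ k, Measurable[blockSigma Z (Set.Iio k)] ((stayedBelow Z γ k).indicator (1 : Ω → ℝ)) :=
    fun k => measurable_const.indicator (measurableSet_stayedBelow k)
  have hint : ∀ k, Integrable (fun ω => (stayedBelow Z γ k).indicator 1 ω * Z k ω) μ := fun k =>
    integrable_indicator_one_mul (blockSigma_le hZm _ _ (measurableSet_stayedBelow k))
      (.of_bound (hZm k).aestronglyMeasurable B (ae_of_all _ (hB k)))
  have hwald : ∀ k, ∫ ω, (stayedBelow Z γ k).indicator 1 ω * Z k ω ∂μ
      = μ.real (stayedBelow Z γ k) * ∫ ω, Z k ω ∂μ := fun k => by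
    rw [integral_mul_eq_mul_integral_of_disjoint hZ hZm (Set.Iio_disjoint_Ici le_rfl) (hG k)
      (measurable_blockSigma (Set.mem_Ici.2 le_rfl)),
      integral_indicator_one (blockSigma_le hZm _ _ (measurableSet_stayedBelow k))]
  rw [le_div_iff₀ hC, sum_mul]
  calc ∑ k ∈ range n, μ.real (stayedBelow Z γ k) * C
      ≤ ∑ k ∈ range n, ∫ ω, (stayedBelow Z γ k).indicator 1 ω * Z k ω ∂μ :=
        sum_le_sum fun k _ => (hwald k).symm ▸
          mul_le_mul_of_nonneg_left (hmean k) measureReal_nonneg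
    _ = ∫ ω, ∑ k ∈ range n, (stayedBelow Z γ k).indicator 1 ω * Z k ω ∂μ :=
        (integral_finsetSum _ fun k _ => hint k).symm
    _ ≤ ∫ _, γ + B ∂μ :=
        integral_mono (integrable_finsetSum _ fun k _ => hint k) (integrable_const _)
          (sum_indicator_stayedBelow_mul_le hγ hB n)
    _ = γ + B := by simp

lemma integrable_prod_exp_neg_half (hZm : ∀ k, Measurable (Z k)) (hB : ∀ k ω, |Z k ω| ≤ B)
    (s : Finset ℕ) : Integrable (fun ω => ∏ k ∈ s, exp (-Z k ω / 2)) μ := by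
  refine Integrable.of_bound
    (Finset.measurable_prod _ fun k _ => ((hZm k).neg.div_const 2).exp).aestronglyMeasurable
    (exp (B / 2) ^ s.card) (ae_of_all _ fun ω => ?_)
  rw [Real.norm_of_nonneg (prod_nonneg fun _ _ => (exp_pos _).le), ← prod_const]
  exact prod_le_prod (fun _ _ => (exp_pos _).le) fun k _ =>
    exp_le_exp.2 (by linarith [(abs_le.1 (hB k ω)).1])

lemma integral_exp_neg_posPart_le (hZ : iIndepFun Z μ) (hZm : ∀ k, Measurable (Z k))
    (hB : ∀ k ω, |Z k ω| ≤ B) (hρ : ∀ k, ∫ ω, exp (-Z k ω / 2) ∂μ ≤ ρ) (hγ : 0 ≤ γ) (n : ℕ) :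
    ∫ ω, exp (-max (walk Z n ω - γ) 0) ∂μ ≤ μ.real (stayedBelow Z γ n)
      + ∑ m ∈ range n, μ.real (exitsAfter Z γ m) * ρ ^ (n - (m + 1)) := by
  have hG : MeasurableSet (stayedBelow Z γ n) :=
    blockSigma_le hZm _ _ (measurableSet_stayedBelow n)
  have hD : ∀ m, MeasurableSet (exitsAfter Z γ m) :=
    fun m => blockSigma_le hZm _ _ (measurableSet_exitsAfter m)
  have hint : ∀ m, Integrable (fun ω => (exitsAfter Z γ m).indicator 1 ω
      * ∏ k ∈ Ico (m + 1) n, exp (-Z k ω / 2)) μ :=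
    fun m => integrable_indicator_one_mul (hD m) (integrable_prod_exp_neg_half hZm hB _)
  have hexit : ∀ m, ∫ ω, (exitsAfter Z γ m).indicator 1 ω
      * ∏ k ∈ Ico (m + 1) n, exp (-Z k ω / 2) ∂μ
        ≤ μ.real (exitsAfter Z γ m) * ρ ^ (n - (m + 1)) := by
    intro m
    rw [integral_mul_eq_mul_integral_of_disjoint hZ hZm (Set.Iio_disjoint_Ici le_rfl)
      (f := (exitsAfter Z γ m).indicator 1) (g := fun ω => ∏ k ∈ Ico (m + 1) n, exp (-Z k ω / 2))
      (measurable_const.indicator (measurableSet_exitsAfter m))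
      (Finset.measurable_prod _ fun k hk =>
        ((measurable_blockSigma (Set.mem_Ici.2 (mem_Ico.1 hk).1)).neg.div_const 2).exp),
      integral_indicator_one (hD m), ← Nat.card_Ico]
    exact mul_le_mul_of_nonneg_left (integral_prod_comp_le_pow hZ hZm
      (measurable_id.neg.div_const 2).exp (fun _ => (exp_pos _).le) hρ _) measureReal_nonneg
  have hG1 : Integrable ((stayedBelow Z γ n).indicator (1 : Ω → ℝ)) μ :=
    (integrable_const 1).indicator hG
  calc ∫ ω, exp (-max (walk Z n ω - γ) 0) ∂μ
      ≤ ∫ ω, ((stayedBelow Z γ n).indicator 1 ω + ∑ m ∈ range n, (exitsAfter Z γ m).indicator 1 ω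
          * ∏ k ∈ Ico (m + 1) n, exp (-Z k ω / 2)) ∂μ :=
        integral_mono_of_nonneg (ae_of_all _ fun _ => (exp_pos _).le)
          (hG1.add (integrable_finsetSum _ fun m _ => hint m))
          (ae_of_all _ (exp_neg_posPart_le_indicator_add_sum hγ n))
    _ = μ.real (stayedBelow Z γ n) + ∑ m ∈ range n, ∫ ω, (exitsAfter Z γ m).indicator 1 ω
          * ∏ k ∈ Ico (m + 1) n, exp (-Z k ω / 2) ∂μ := by
        rw [integral_add hG1 (integrable_finsetSum _ fun m _ => hint m), integral_indicator_one hG,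
          integral_finsetSum _ fun m _ => hint m]
    _ ≤ _ := add_le_add le_rfl (sum_le_sum fun m _ => hexit m)

lemma sum_measureReal_exitsAfter_le_one (hZm : ∀ k, Measurable (Z k)) (hγ : 0 ≤ γ) (n : ℕ) :
    ∑ m ∈ range n, μ.real (exitsAfter Z γ m) ≤ 1 := by
  have hG : MeasurableSet (stayedBelow Z γ n) :=
    blockSigma_le hZm _ _ (measurableSet_stayedBelow n)
  have hG1 : Integrable ((stayedBelow Z γ n).indicator (1 : Ω → ℝ)) μ :=
    (integrable_const 1).indicator hG
  have hD : ∀ m, Integrable ((exitsAfter Z γ m).indicator (1 : Ω → ℝ)) μ :=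
    fun m => (integrable_const 1).indicator (blockSigma_le hZm _ _ (measurableSet_exitsAfter m))
  calc ∑ m ∈ range n, μ.real (exitsAfter Z γ m)
      ≤ μ.real (stayedBelow Z γ n) + ∑ m ∈ range n, μ.real (exitsAfter Z γ m) :=
        le_add_of_nonneg_left measureReal_nonneg
    _ = ∫ ω, ((stayedBelow Z γ n).indicator 1 ω
          + ∑ m ∈ range n, (exitsAfter Z γ m).indicator 1 ω) ∂μ := by
        rw [integral_add hG1 (integrable_finsetSum _ fun m _ => hD m),
          integral_indicator_one hG, integral_finsetSum _ fun m _ => hD m]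
        exact congrArg _ (sum_congr rfl fun m _ =>
          (integral_indicator_one (blockSigma_le hZm _ _ (measurableSet_exitsAfter m))).symm)
    _ = 1 := by simp [indicator_stayedBelow_add_sum_indicator_exitsAfter hγ]

theorem summable_integral_exp_neg_posPart_and_tsum_le (hZ : iIndepFun Z μ)
    (hZm : ∀ k, Measurable (Z k)) (hB : ∀ k ω, |Z k ω| ≤ B) {C : ℝ} (hC : 0 < C)
    (hmean : ∀ k, C ≤ ∫ ω, Z k ω ∂μ) (hρ : ∀ k, ∫ ω, exp (-Z k ω / 2) ∂μ ≤ ρ) (hρ1 : ρ < 1)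
    (hγ : 0 ≤ γ) :
    Summable (fun n => ∫ ω, exp (-max (walk Z n ω - γ) 0) ∂μ) ∧
      ∑' n, ∫ ω, exp (-max (walk Z n ω - γ) 0) ∂μ ≤ γ / C + (B / C + 1 / (1 - ρ)) := by
  have hρ0 : 0 ≤ ρ := (integral_nonneg fun ω => (exp_pos _).le).trans (hρ 0)
  have hnonneg : ∀ n, 0 ≤ ∫ ω, exp (-max (walk Z n ω - γ) 0) ∂μ :=
    fun n => integral_nonneg fun ω => (exp_pos _).le
  have hpartial : ∀ N, ∑ n ∈ range N, ∫ ω, exp (-max (walk Z n ω - γ) 0) ∂μ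
      ≤ γ / C + (B / C + 1 / (1 - ρ)) := fun N =>
    calc _ ≤ ∑ n ∈ range N, (μ.real (stayedBelow Z γ n)
          + ∑ m ∈ range n, μ.real (exitsAfter Z γ m) * ρ ^ (n - (m + 1))) :=
          sum_le_sum fun n _ => integral_exp_neg_posPart_le hZ hZm hB hρ hγ n
      _ ≤ (γ + B) / C + (∑ m ∈ range N, μ.real (exitsAfter Z γ m)) / (1 - ρ) := by
          rw [sum_add_distrib]
          exact add_le_add (sum_measureReal_stayedBelow_le hZ hZm hB hC hmean hγ N)
            (sum_range_sum_range_mul_pow_le (fun _ => measureReal_nonneg) hρ0 hρ1 N)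
      _ ≤ (γ + B) / C + 1 / (1 - ρ) := by
          gcongr
          exact sum_measureReal_exitsAfter_le_one hZm hγ N
      _ = _ := by ring
  exact ⟨summable_of_sum_range_le hnonneg hpartial, Real.tsum_le_of_sum_range_le hnonneg hpartial⟩

end Expectations

lemma integral_comp_eq_sum_of_law {α Ω : Type*} [Fintype α] [MeasurableSpace α]
    [MeasurableSingletonClass α] [MeasurableSpace Ω] {μ : Measure Ω} [IsFiniteMeasure μ]
    {V : Ω → α} (hV : Measurable V) {w : α → ℝ} (hw : ∀ a, 0 ≤ w a)
    (hlaw : ∀ a, μ (V ⁻¹' {a}) = ENNReal.ofReal (w a)) (f : α → ℝ) :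
    ∫ ω, f (V ω) ∂μ = ∑ a, w a * f a := by
  rw [← integral_map hV.aemeasurable (measurable_of_finite f).aestronglyMeasurable,
    integral_fintype Integrable.of_finite]
  refine sum_congr rfl fun a _ => ?_
  rw [measureReal_def, Measure.map_apply hV (measurableSet_singleton a), hlaw,
    ENNReal.toReal_ofReal (hw a), smul_eq_mul]

section Channel

variable {𝒳 𝒴 : Type*} [Fintype 𝒳] [Nonempty 𝒳] {pX : 𝒳 → ℝ} {W : 𝒳 → 𝒴 → ℝ}

lemma outDist_pos (hpX : ∀ x, 0 < pX x) (hW : ∀ x y, 0 < W x y) (y : 𝒴) :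
    0 < outDist pX W y :=
  sum_pos (fun x _ => mul_pos (hpX x) (hW x y)) univ_nonempty

lemma sum_mul_exp_neg_infoDen [Fintype 𝒴] (hpX : ∀ x, 0 < pX x) (hpXsum : ∑ x, pX x = 1)
    (hW : ∀ x y, 0 < W x y) (hWsum : ∀ x, ∑ y, W x y = 1) :
    ∑ p : 𝒳 × 𝒴, pX p.1 * W p.1 p.2 * exp (-infoDen pX W p.1 p.2) = 1 := by
  have hterm : ∀ x y, pX x * W x y * exp (-infoDen pX W x y) = pX x * outDist pX W y := by
    intro x y
    rw [infoDen, exp_neg, exp_log (div_pos (hW x y) (outDist_pos hpX hW y))]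
    field_simp [(hW x y).ne']
  rw [Fintype.sum_prod_type]
  simp only [hterm]
  rw [← sum_mul_sum, hpXsum, one_mul]
  simp only [outDist]
  rw [sum_comm, ← hpXsum]
  exact sum_congr rfl fun x _ => by rw [← mul_sum, hWsum x, mul_one]

end Channel

theorem stmt13_general {𝒳 𝒴 : Type*} [Fintype 𝒳] [Nonempty 𝒳] [Fintype 𝒴]
    [MeasurableSpace 𝒳] [DiscreteMeasurableSpace 𝒳]
    [MeasurableSpace 𝒴] [DiscreteMeasurableSpace 𝒴]
    (pX : 𝒳 → ℝ) (hpXpos : ∀ x, 0 < pX x) (hpXsum : ∑ x, pX x = 1)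
    (W : 𝒳 → 𝒴 → ℝ) (hWpos : ∀ x y, 0 < W x y) (hWsum : ∀ x, ∑ y, W x y = 1)
    (C : ℝ) (hCdef : C = ∑ x, ∑ y, pX x * W x y * infoDen pX W x y)
    -- `P_{XY} ≠ P_X ⊗ P_Y`, equivalently `C > 0`:
    (hC : 0 < C)
    {Ω : Type*} [MeasurableSpace Ω] (μ : Measure Ω) [IsProbabilityMeasure μ]
    (X : ℕ → Ω → 𝒳) (Y : ℕ → Ω → 𝒴)
    (hXm : ∀ k, Measurable (X k)) (hYm : ∀ k, Measurable (Y k))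
    -- `((X_k, Y_k))_k` is an i.i.d. sequence with law `P_{XY}`:
    (hXYindep : iIndepFun (fun k ω => (X k ω, Y k ω)) μ)
    (hXYlaw : ∀ k x y, μ {ω | X k ω = x ∧ Y k ω = y} = ENNReal.ofReal (pX x * W x y)) :
    ∃ a : ℝ, ∀ γ : ℝ, 0 ≤ γ →
      Summable (fun n : ℕ => ∫ ω, Real.exp (-(max
          ((∑ k ∈ Finset.range n, infoDen pX W (X k ω) (Y k ω)) - γ) 0)) ∂μ)
      ∧ ∑' n : ℕ, (∫ ω, Real.exp (-(max
            ((∑ k ∈ Finset.range n, infoDen pX W (X k ω) (Y k ω)) - γ) 0)) ∂μ)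
          ≤ γ / C + a := by
  set i : 𝒳 × 𝒴 → ℝ := fun p => infoDen pX W p.1 p.2
  have hw : ∀ p : 𝒳 × 𝒴, 0 < pX p.1 * W p.1 p.2 := fun p => mul_pos (hpXpos _) (hWpos _ _)
  have hexpect : ∀ k (f : 𝒳 × 𝒴 → ℝ),
      ∫ ω, f (X k ω, Y k ω) ∂μ = ∑ p : 𝒳 × 𝒴, pX p.1 * W p.1 p.2 * f p := fun k =>
    integral_comp_eq_sum_of_law ((hXm k).prodMk (hYm k)) (fun p => (hw p).le)
      fun p => by rw [← hXYlaw k p.1 p.2]; congr 1; ext ω; simp [Prod.ext_iff]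
  obtain ⟨B, hB⟩ : ∃ B, ∀ p, |i p| ≤ B :=
    (Finite.bddAbove_range fun p => |i p|).imp fun _ hB p => hB ⟨p, rfl⟩
  obtain ⟨p₀, hp₀⟩ : ∃ p, i p ≠ 0 := by
    by_contra! h
    have h' : ∀ x y, infoDen pX W x y = 0 := fun x y => h (x, y)
    simp [hCdef, h'] at hC
  set ρ := ∑ p : 𝒳 × 𝒴, pX p.1 * W p.1 p.2 * exp (-i p / 2)
  have hρ1 : ρ < 1 :=
    sum_mul_exp_neg_half_lt_one (fun p => (hw p).le)
      (by simp [Fintype.sum_prod_type, ← mul_sum, hWsum, hpXsum])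
      (sum_mul_exp_neg_infoDen hpXpos hpXsum hWpos hWsum)
      (hw p₀) hp₀
  refine ⟨B / C + 1 / (1 - ρ), fun γ hγ => ?_⟩
  exact summable_integral_exp_neg_posPart_and_tsum_le
    (hXYindep.comp (fun _ => i) fun _ => measurable_of_countable _)
    (fun k => (measurable_of_countable i).comp ((hXm k).prodMk (hYm k))) (fun k ω => hB _) hC
    (fun k => (hCdef.trans ((hexpect k i).trans (Fintype.sum_prod_type _)).symm).le)
    (fun k => (hexpect k fun p => exp (-i p / 2)).le) hρ1 hγ

/-- There is a finite constant `a` (depending only on `P_X` and `W`)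
such that for every real `γ ≥ 0`, `Σ_{n=0}^∞ E[exp(−[Sₙ − γ]⁺)] ≤ γ/C + a`. -/
theorem stmt13 {𝒳 𝒴 : Type*} [Fintype 𝒳] [Nonempty 𝒳] [Fintype 𝒴] [Nonempty 𝒴]
    [MeasurableSpace 𝒳] [DiscreteMeasurableSpace 𝒳]
    [MeasurableSpace 𝒴] [DiscreteMeasurableSpace 𝒴]
    (pX : 𝒳 → ℝ) (hpXpos : ∀ x, 0 < pX x) (hpXsum : ∑ x, pX x = 1)
    (W : 𝒳 → 𝒴 → ℝ) (hWpos : ∀ x y, 0 < W x y) (hWsum : ∀ x, ∑ y, W x y = 1)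
    (C : ℝ) (hCdef : C = ∑ x, ∑ y, pX x * W x y * infoDen pX W x y)
    -- `P_{XY} ≠ P_X ⊗ P_Y`, equivalently `C > 0`:
    (hC : 0 < C)
    {Ω : Type*} [MeasurableSpace Ω] (μ : Measure Ω) [IsProbabilityMeasure μ]
    (X : ℕ → Ω → 𝒳) (Y : ℕ → Ω → 𝒴)
    (hXm : ∀ k, Measurable (X k)) (hYm : ∀ k, Measurable (Y k))
    -- `((X_k, Y_k))_k` is an i.i.d. sequence with law `P_{XY}`:
    (hXYindep : iIndepFun (fun k ω => (X k ω, Y k ω)) μ)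
    (hXYlaw : ∀ k x y, μ {ω | X k ω = x ∧ Y k ω = y} = ENNReal.ofReal (pX x * W x y)) :
    ∃ a : ℝ, ∀ γ : ℝ, 0 ≤ γ →
      Summable (fun n : ℕ => ∫ ω, Real.exp (-(max
          ((∑ k ∈ Finset.range n, infoDen pX W (X k ω) (Y k ω)) - γ) 0)) ∂μ)
      ∧ ∑' n : ℕ, (∫ ω, Real.exp (-(max
            ((∑ k ∈ Finset.range n, infoDen pX W (X k ω) (Y k ω)) - γ) 0)) ∂μ)
          ≤ γ / C + a :=
  stmt13_general pX hpXpos hpXsum W hWpos hWsum C hCdef hC μ X Y hXm hYm hXYindep hXYlaw
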